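/- For every smooth f : ℝ^k × ℝ^k → ℝ and every point (p,ξ) ∈ ℝ^k × ℝ^k one has the identity Γ₂(f)(p,ξ) = Γ₂^L(f(·,ξ))(p) − Σ_{i=1}^k Σ_{j=1}^k (V_i f)(p,ξ) · (V_i σ_j)(p) · (∂f/∂ξ_j)(p,ξ), where V_i acts in the p-variable. -/

import Mathlib

open scoped ContDiff


noncomputable section

abbrev Ek (k : ℕ) : Type := EuclideanSpace ℝ (Fin k)

/-- Action of a vector field `W` on a function `g`: `(Wg)(x) = ⟨W(x), ∇g(x)⟩ = dg_x(W(x))`. -/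
def vAct {k : ℕ} (W : Ek k → Ek k) (g : Ek k → ℝ) (x : Ek k) : ℝ :=
  fderiv ℝ g x (W x)

/-- The operator `L = ∑ V_i ∘ V_i + V_0`. -/
def opL {k : ℕ} (V₀ : Ek k → Ek k) (V : Fin k → Ek k → Ek k) (g : Ek k → ℝ) (x : Ek k) : ℝ :=
  ∑ i : Fin k, vAct (V i) (vAct (V i) g) x + vAct V₀ g x

/-- Carré du champ of an operator `A`. -/
def carre {X : Type*} (A : (X → ℝ) → X → ℝ) (g h : X → ℝ) (x : X) : ℝ :=
  (1 / 2) * (A (fun y => g y * h y) x - g x * A h x - h x * A g x)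

/-- Iterated carré du champ of an operator `A`. -/
def carre2 {X : Type*} (A : (X → ℝ) → X → ℝ) (g : X → ℝ) (x : X) : ℝ :=
  (1 / 2) * (A (carre A g g) x - 2 * carre A g (A g) x)

/-- Partial derivative `∂f/∂ξ_j` (in the second variable). -/
def dxi {k : ℕ} (j : Fin k) (f : Ek k × Ek k → ℝ) (x : Ek k × Ek k) : ℝ :=
  fderiv ℝ (fun ξ => f (x.1, ξ)) x.2 (EuclideanSpace.single j 1)

/-- The Kolmogorov type operator `𝓛 f(p,ξ) = (L f(·,ξ))(p) + ∑ j σ_j(p) ∂f/∂ξ_j (p,ξ)`. -/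
def opLL {k : ℕ} (V₀ : Ek k → Ek k) (V : Fin k → Ek k → Ek k) (Sg : Ek k → Ek k)
    (f : Ek k × Ek k → ℝ) (x : Ek k × Ek k) : ℝ :=
  opL V₀ V (fun p => f (p, x.2)) x.1 + ∑ j : Fin k, Sg x.1 j * dxi j f x

/-- The bilinear form `Γ^Z(f,h) = ⟨∇_ξ f, ∇_ξ h⟩`. -/
def gamZ {k : ℕ} (f h : Ek k × Ek k → ℝ) (x : Ek k × Ek k) : ℝ :=
  inner ℝ (gradient (fun ξ => f (x.1, ξ)) x.2) (gradient (fun ξ => h (x.1, ξ)) x.2)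

/-- `Γ₂^Z(f) = (1/2)(𝓛(Γ^Z(f)) − 2Γ^Z(f, 𝓛f))`. -/
def gamZ2 {k : ℕ} (V₀ : Ek k → Ek k) (V : Fin k → Ek k → Ek k) (Sg : Ek k → Ek k)
    (f : Ek k × Ek k → ℝ) (x : Ek k × Ek k) : ℝ :=
  (1 / 2) * (opLL V₀ V Sg (gamZ f f) x - 2 * gamZ f (opLL V₀ V Sg f) x)

namespace Aux
variable {k : ℕ}

lemma cdiff {E F : Type*} [NormedAddCommGroup E] [NormedSpace ℝ E] [NormedAddCommGroup F]
    [NormedSpace ℝ F] {g : E → F} (hg : ContDiff ℝ ∞ g) : Differentiable ℝ g :=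
  hg.differentiable (by simp)

lemma vAct_contDiff {W : Ek k → Ek k} {g : Ek k → ℝ} (hW : ContDiff ℝ ∞ W)
    (hg : ContDiff ℝ ∞ g) : ContDiff ℝ ∞ (vAct W g) :=
  (hg.fderiv_right (by simp)).clm_apply hW

lemma vAct_add {W : Ek k → Ek k} {a b : Ek k → ℝ} {x : Ek k}
    (ha : DifferentiableAt ℝ a x) (hb : DifferentiableAt ℝ b x) :
    vAct W (fun y => a y + b y) x = vAct W a x + vAct W b x := by
  simp [vAct, fderiv_fun_add ha hb]

lemma vAct_mul {W : Ek k → Ek k} {a b : Ek k → ℝ} {x : Ek k}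
    (ha : DifferentiableAt ℝ a x) (hb : DifferentiableAt ℝ b x) :
    vAct W (fun y => a y * b y) x = a x * vAct W b x + b x * vAct W a x := by
  simp [vAct, fderiv_fun_mul ha hb]

lemma vAct_sum {W : Ek k → Ek k} {n : ℕ} {u : Fin n → Ek k → ℝ} {x : Ek k}
    (hu : ∀ i, DifferentiableAt ℝ (u i) x) :
    vAct W (fun y => ∑ i, u i y) x = ∑ i, vAct W (u i) x := by
  simp [vAct, fderiv_fun_sum (fun i _ => hu i)]

lemma carre_opL {V₀ : Ek k → Ek k} {V : Fin k → Ek k → Ek k}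
    (hV : ∀ i, ContDiff ℝ ∞ (V i))
    {g h : Ek k → ℝ} (hg : ContDiff ℝ ∞ g) (hh : ContDiff ℝ ∞ h) (x : Ek k) :
    carre (opL V₀ V) g h x = ∑ i : Fin k, vAct (V i) g x * vAct (V i) h x := by
  have hdg := cdiff hg; have hdh := cdiff hh
  have hmul : ∀ W : Ek k → Ek k,
      vAct W (fun y => g y * h y) = fun y => g y * vAct W h y + h y * vAct W g y :=
    fun W => funext fun y => vAct_mul (hdg y) (hdh y)
  have key : ∀ i : Fin k, vAct (V i) (vAct (V i) (fun y => g y * h y)) x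
      = g x * vAct (V i) (vAct (V i) h) x + h x * vAct (V i) (vAct (V i) g) x
        + 2 * (vAct (V i) g x * vAct (V i) h x) := by
    intro i
    rw [hmul (V i),
      vAct_add ((hdg x).fun_mul ((cdiff (vAct_contDiff (hV i) hh)) x))
        ((hdh x).fun_mul ((cdiff (vAct_contDiff (hV i) hg)) x)),
      vAct_mul (hdg x) (cdiff (vAct_contDiff (hV i) hh) x),
      vAct_mul (hdh x) (cdiff (vAct_contDiff (hV i) hg) x)]
    ring
  have hsum : ∑ i : Fin k, vAct (V i) (vAct (V i) (fun y => g y * h y)) x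
      = ∑ i : Fin k, (g x * vAct (V i) (vAct (V i) h) x + h x * vAct (V i) (vAct (V i) g) x
        + 2 * (vAct (V i) g x * vAct (V i) h x)) := Finset.sum_congr rfl fun i _ => key i
  have hv0 : vAct V₀ (fun y => g y * h y) x = g x * vAct V₀ h x + h x * vAct V₀ g x :=
    vAct_mul (hdg x) (hdh x)
  simp only [carre, opL, hsum, hv0, Finset.sum_add_distrib, ← Finset.mul_sum]
  ring


lemma slice1_contDiff {F : Ek k × Ek k → ℝ} (hF : ContDiff ℝ ∞ F) (ξ : Ek k) :
    ContDiff ℝ ∞ (fun p' => F (p', ξ)) :=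
  hF.comp (contDiff_id.prodMk contDiff_const)

lemma slice2_contDiff {F : Ek k × Ek k → ℝ} (hF : ContDiff ℝ ∞ F) (p : Ek k) :
    ContDiff ℝ ∞ (fun ξ' => F (p, ξ')) :=
  hF.comp (contDiff_const.prodMk contDiff_id)

lemma vAct_slice {F : Ek k × Ek k → ℝ} (hF : ContDiff ℝ ∞ F) (W : Ek k → Ek k)
    (p ξ : Ek k) : vAct W (fun p' => F (p', ξ)) p = fderiv ℝ F (p, ξ) (W p, 0) := by
  have h1 : HasFDerivAt (fun p' => F (p', ξ))
      ((fderiv ℝ F (p, ξ)).comp (ContinuousLinearMap.inl ℝ (Ek k) (Ek k))) p :=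
    (cdiff hF (p, ξ)).hasFDerivAt.comp p (hasFDerivAt_prodMk_left p ξ)
  rw [vAct, h1.fderiv]; rfl

lemma dxi_eq {F : Ek k × Ek k → ℝ} (hF : ContDiff ℝ ∞ F) (j : Fin k) (x : Ek k × Ek k) :
    dxi j F x = fderiv ℝ F x (0, EuclideanSpace.single j 1) := by
  have h1 : HasFDerivAt (fun ξ' => F (x.1, ξ'))
      ((fderiv ℝ F x).comp (ContinuousLinearMap.inr ℝ (Ek k) (Ek k))) x.2 :=
    (cdiff hF x).hasFDerivAt.comp x.2 (hasFDerivAt_prodMk_right x.1 x.2)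
  rw [dxi, h1.fderiv]; rfl

lemma dxi_mul {u v : Ek k × Ek k → ℝ} (hu : ContDiff ℝ ∞ u) (hv : ContDiff ℝ ∞ v)
    (j : Fin k) (x : Ek k × Ek k) :
    dxi j (fun y => u y * v y) x = u x * dxi j v x + v x * dxi j u x := by
  simp [dxi, fderiv_fun_mul (cdiff (slice2_contDiff hu x.1) x.2) (cdiff (slice2_contDiff hv x.1) x.2)]

lemma dxi_sum {n : ℕ} {u : Fin n → Ek k × Ek k → ℝ} (hu : ∀ i, ContDiff ℝ ∞ (u i))
    (j : Fin k) (x : Ek k × Ek k) :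
    dxi j (fun y => ∑ i, u i y) x = ∑ i, dxi j (u i) x := by
  simp [dxi, fderiv_fun_sum (fun i _ => cdiff (slice2_contDiff (hu i) x.1) x.2)]

lemma fderiv_fderiv_apply {F : Ek k × Ek k → ℝ} (hF : ContDiff ℝ ∞ F)
    (x a b : Ek k × Ek k) :
    fderiv ℝ (fun y => fderiv ℝ F y a) x b = fderiv ℝ (fderiv ℝ F) x b a := by
  have hdF : DifferentiableAt ℝ (fderiv ℝ F) x := cdiff (hF.fderiv_right (by simp)) x
  rw [fderiv_clm_apply hdF (differentiableAt_const a)]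
  simp

lemma fderiv_apply_comm {F : Ek k × Ek k → ℝ} (hF : ContDiff ℝ ∞ F)
    (x a b : Ek k × Ek k) :
    fderiv ℝ (fun y => fderiv ℝ F y a) x b = fderiv ℝ (fun y => fderiv ℝ F y b) x a := by
  rw [fderiv_fderiv_apply hF x a b, fderiv_fderiv_apply hF x b a]
  exact hF.contDiffAt.isSymmSndFDerivAt (by rw [minSmoothness_of_isRCLikeNormedField]; exact WithTop.coe_le_coe.mpr (le_top : (2:ℕ∞) ≤ ⊤)) b a


/-- `Φ_i(x) = d f_x (V_i(x₁), 0)`, the action of `V_i` (in the `p`-variable) as a joint function. -/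
def Phi (V : Fin k → Ek k → Ek k) (f : Ek k × Ek k → ℝ) (i : Fin k)
    (x : Ek k × Ek k) : ℝ :=
  fderiv ℝ f x (V i x.1, 0)

lemma Phi_contDiff {V : Fin k → Ek k → Ek k} {f : Ek k × Ek k → ℝ}
    (hV : ∀ i, ContDiff ℝ ∞ (V i)) (hf : ContDiff ℝ ∞ f) (i : Fin k) :
    ContDiff ℝ ∞ (Phi V f i) :=
  (hf.fderiv_right (by simp)).clm_apply (((hV i).comp contDiff_fst).prodMk contDiff_const)

/-- directional derivative with constant direction, as a joint function -/
def Psi (f : Ek k × Ek k → ℝ) (v : Ek k × Ek k) (x : Ek k × Ek k) : ℝ :=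
  fderiv ℝ f x v

lemma Psi_contDiff {f : Ek k × Ek k → ℝ} (hf : ContDiff ℝ ∞ f) (v : Ek k × Ek k) :
    ContDiff ℝ ∞ (Psi f v) :=
  (hf.fderiv_right (by simp)).clm_apply contDiff_const

lemma opLL_rep {V₀ : Ek k → Ek k} {V : Fin k → Ek k → Ek k} {Sg : Ek k → Ek k}
    {f : Ek k × Ek k → ℝ} (hV : ∀ i, ContDiff ℝ ∞ (V i)) (hf : ContDiff ℝ ∞ f) :
    opLL V₀ V Sg f = fun x =>
      (∑ i : Fin k, fderiv ℝ (Phi V f i) x (V i x.1, 0) + fderiv ℝ f x (V₀ x.1, 0))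
        + ∑ j : Fin k, Sg x.1 j * Psi f (0, EuclideanSpace.single j 1) x := by
  funext x
  have h1 : ∀ i : Fin k, vAct (V i) (vAct (V i) (fun q => f (q, x.2))) x.1
      = fderiv ℝ (Phi V f i) x (V i x.1, 0) := by
    intro i
    have hin : vAct (V i) (fun q => f (q, x.2)) = fun p' => Phi V f i (p', x.2) :=
      funext fun p' => vAct_slice hf (V i) p' x.2
    rw [hin]
    exact vAct_slice (Phi_contDiff hV hf i) (V i) x.1 x.2
  have h2 : vAct V₀ (fun q => f (q, x.2)) x.1 = fderiv ℝ f x (V₀ x.1, 0) :=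
    vAct_slice hf V₀ x.1 x.2
  have h3 : ∑ j : Fin k, Sg x.1 j * dxi j f x
      = ∑ j : Fin k, Sg x.1 j * Psi f (0, EuclideanSpace.single j 1) x :=
    Finset.sum_congr rfl fun j _ => by simp only [Psi]; rw [dxi_eq hf j x]
  have h4 : ∑ i : Fin k, vAct (V i) (vAct (V i) fun q => f (q, x.2)) x.1
      = ∑ i : Fin k, fderiv ℝ (Phi V f i) x (V i x.1, 0) :=
    Finset.sum_congr rfl fun i _ => h1 i
  simp only [opLL, opL]
  rw [h4, h2, h3]

lemma opLL_contDiff {V₀ : Ek k → Ek k} {V : Fin k → Ek k → Ek k} {Sg : Ek k → Ek k}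
    {f : Ek k × Ek k → ℝ} (hV₀ : ContDiff ℝ ∞ V₀) (hV : ∀ i, ContDiff ℝ ∞ (V i))
    (hSg : ContDiff ℝ ∞ Sg) (hf : ContDiff ℝ ∞ f) :
    ContDiff ℝ ∞ (opLL V₀ V Sg f) := by
  rw [opLL_rep hV hf]
  refine ContDiff.add (ContDiff.add ?_ ?_) ?_
  · exact ContDiff.sum fun i _ =>
      ((Phi_contDiff hV hf i).fderiv_right (by simp)).clm_apply
        (((hV i).comp contDiff_fst).prodMk contDiff_const)
  · exact (hf.fderiv_right (by simp)).clm_apply ((hV₀.comp contDiff_fst).prodMk contDiff_const)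
  · exact ContDiff.sum fun j _ =>
      ((contDiff_euclidean.1 hSg j).comp contDiff_fst).mul (Psi_contDiff hf _)

lemma carre_opLL {V₀ : Ek k → Ek k} {V : Fin k → Ek k → Ek k} {Sg : Ek k → Ek k}
    {f h : Ek k × Ek k → ℝ} (hV : ∀ i, ContDiff ℝ ∞ (V i))
    (hf : ContDiff ℝ ∞ f) (hh : ContDiff ℝ ∞ h) (p ξ : Ek k) :
    carre (opLL V₀ V Sg) f h (p, ξ)
      = ∑ i : Fin k, vAct (V i) (fun p' => f (p', ξ)) p * vAct (V i) (fun p' => h (p', ξ)) p := by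
  have hfs := slice1_contDiff hf ξ
  have hhs := slice1_contDiff hh ξ
  have HC := carre_opL (V₀ := V₀) hV hfs hhs p
  have hdx : ∑ j : Fin k, Sg p j * dxi j (fun y => f y * h y) (p, ξ)
      = ∑ j : Fin k, (f (p, ξ) * (Sg p j * dxi j h (p, ξ))
          + h (p, ξ) * (Sg p j * dxi j f (p, ξ))) :=
    Finset.sum_congr rfl fun j _ => by rw [dxi_mul hf hh j (p, ξ)]; ring
  simp only [carre, opLL] at HC ⊢
  rw [hdx, Finset.sum_add_distrib, ← Finset.mul_sum, ← Finset.mul_sum]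
  linear_combination HC

lemma alg (n : ℕ) (OPG : ℝ) (a M s b : Fin n → ℝ) (c t : Fin n → Fin n → ℝ) :
    (1/2) * ((OPG + ∑ j, s j * ∑ i, (a i * c i j + a i * c i j))
        - 2 * ∑ i, a i * (M i + ∑ j, (s j * c i j + b j * t i j)))
      = (1/2) * (OPG - 2 * ∑ i, a i * M i) - ∑ i, ∑ j, a i * t i j * b j := by
  have e1 : ∑ j, s j * ∑ i, (a i * c i j + a i * c i j)
      = 2 * ∑ i, ∑ j, a i * (s j * c i j) := by
    calc ∑ j, s j * ∑ i, (a i * c i j + a i * c i j)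
        = ∑ j, ∑ i, 2 * (a i * (s j * c i j)) := Finset.sum_congr rfl fun j _ => by
          rw [Finset.mul_sum]; exact Finset.sum_congr rfl fun i _ => by ring
      _ = ∑ i, ∑ j, 2 * (a i * (s j * c i j)) := Finset.sum_comm
      _ = 2 * ∑ i, ∑ j, a i * (s j * c i j) := by
          rw [Finset.mul_sum]
          exact Finset.sum_congr rfl fun i _ => by rw [Finset.mul_sum]
  have e2 : ∑ i, a i * (M i + ∑ j, (s j * c i j + b j * t i j))
      = ∑ i, a i * M i + ∑ i, ∑ j, a i * (s j * c i j) + ∑ i, ∑ j, a i * t i j * b j := by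
    calc ∑ i, a i * (M i + ∑ j, (s j * c i j + b j * t i j))
        = ∑ i, (a i * M i + (∑ j, a i * (s j * c i j) + ∑ j, a i * t i j * b j)) :=
          Finset.sum_congr rfl fun i _ => by
            rw [mul_add, Finset.mul_sum]
            congr 1
            rw [← Finset.sum_add_distrib]
            exact Finset.sum_congr rfl fun j _ => by ring
      _ = _ := by rw [Finset.sum_add_distrib, Finset.sum_add_distrib, ← add_assoc]
  linear_combination (1/2) * e1 - e2


end Aux

/-- **Identity for the iterated carré du champ of `𝓛`.** For smooth `f`,
`Γ₂(f)(p,ξ) = Γ₂^L(f(·,ξ))(p) − ∑ i ∑ j (V_i f)(p,ξ)·(V_i σ_j)(p)·(∂f/∂ξ_j)(p,ξ)`,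
where the `V_i` act in the `p`-variable. -/
theorem carre2_opLL_eq (k : ℕ) (hk : 1 ≤ k)
    (V₀ : Ek k → Ek k) (V : Fin k → Ek k → Ek k)
    (hV₀ : ContDiff ℝ (⊤ : ℕ∞) V₀) (hV : ∀ i, ContDiff ℝ (⊤ : ℕ∞) (V i))
    (Sg : Ek k → Ek k) (hSg : ContDiff ℝ (⊤ : ℕ∞) Sg)
    (f : Ek k × Ek k → ℝ) (hf : ContDiff ℝ (⊤ : ℕ∞) f) (p ξ : Ek k) :
    carre2 (opLL V₀ V Sg) f (p, ξ) =
      carre2 (opL V₀ V) (fun p' => f (p', ξ)) p -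
        ∑ i : Fin k, ∑ j : Fin k,
          vAct (V i) (fun p' => f (p', ξ)) p * vAct (V i) (fun p' => Sg p' j) p *
            dxi j f (p, ξ) := by
  have hf' : ContDiff ℝ ∞ f := hf.of_le (by simp)
  have hV' : ∀ i, ContDiff ℝ ∞ (V i) := fun i => (hV i).of_le (by simp)
  have hV₀' : ContDiff ℝ ∞ V₀ := hV₀.of_le (by simp)
  have hSg' : ContDiff ℝ ∞ Sg := hSg.of_le (by simp)
  have hg : ContDiff ℝ ∞ (fun p' => f (p', ξ)) := Aux.slice1_contDiff hf' ξ
  have hopLg : ContDiff ℝ ∞ (opL V₀ V (fun p' => f (p', ξ))) := by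
    have : ContDiff ℝ ∞ (fun x => ∑ i : Fin k,
        vAct (V i) (vAct (V i) (fun p' => f (p', ξ))) x + vAct V₀ (fun p' => f (p', ξ)) x) :=
      (ContDiff.sum fun i _ => Aux.vAct_contDiff (hV' i) (Aux.vAct_contDiff (hV' i) hg)).add
        (Aux.vAct_contDiff hV₀' hg)
    exact this
  have hLL : ContDiff ℝ ∞ (opLL V₀ V Sg f) := Aux.opLL_contDiff hV₀' hV' hSg' hf'
  have hb' : ∀ (j : Fin k) (x : Ek k × Ek k),
      dxi j f x = Aux.Psi f (0, EuclideanSpace.single j 1) x := fun j x => Aux.dxi_eq hf' j x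
  have hcomm : ∀ (v : Ek k × Ek k) (j : Fin k),
      dxi j (Aux.Psi f v) (p, ξ)
        = fderiv ℝ (Aux.Psi f (0, EuclideanSpace.single j 1)) (p, ξ) v := by
    intro v j
    rw [Aux.dxi_eq (Aux.Psi_contDiff hf' v) j (p, ξ)]
    exact Aux.fderiv_apply_comm hf' (p, ξ) v (0, EuclideanSpace.single j 1)
  -- Γ(f,f) as an explicit function
  have hGam : carre (opLL V₀ V Sg) f f
      = fun x => ∑ i : Fin k, Aux.Phi V f i x * Aux.Phi V f i x := by
    funext x
    obtain ⟨x1, x2⟩ := x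
    rw [Aux.carre_opLL hV' hf' hf' x1 x2]
    exact Finset.sum_congr rfl fun i _ => by
      rw [Aux.vAct_slice hf' (V i) x1 x2]; rfl
  -- the ξ-derivatives of Γ(f,f)
  have hdxiG : ∀ j : Fin k,
      dxi j (fun x => ∑ i : Fin k, Aux.Phi V f i x * Aux.Phi V f i x) (p, ξ)
      = ∑ i : Fin k,
          (vAct (V i) (fun p' => f (p', ξ)) p
              * fderiv ℝ (Aux.Psi f (0, EuclideanSpace.single j 1)) (p, ξ) (V i p, 0)
            + vAct (V i) (fun p' => f (p', ξ)) p
              * fderiv ℝ (Aux.Psi f (0, EuclideanSpace.single j 1)) (p, ξ) (V i p, 0)) := by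
    intro j
    have hrfl : dxi j (fun x => ∑ i : Fin k, Aux.Phi V f i x * Aux.Phi V f i x) (p, ξ)
        = dxi j (fun y => ∑ i : Fin k, Aux.Psi f (V i p, 0) y * Aux.Psi f (V i p, 0) y)
            (p, ξ) := rfl
    rw [hrfl,
      Aux.dxi_sum (fun i => (Aux.Psi_contDiff hf' _).mul (Aux.Psi_contDiff hf' _)) j (p, ξ)]
    refine Finset.sum_congr rfl fun i _ => ?_
    rw [Aux.dxi_mul (Aux.Psi_contDiff hf' _) (Aux.Psi_contDiff hf' _) j (p, ξ),
      show Aux.Psi f (V i p, 0) (p, ξ) = vAct (V i) (fun p' => f (p', ξ)) p from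
        (Aux.vAct_slice hf' (V i) p ξ).symm,
      hcomm (V i p, 0) j]
  -- slice of 𝓛 f in the p-variable
  have hrw : (fun p' => opLL V₀ V Sg f (p', ξ))
      = fun p' => opL V₀ V (fun q => f (q, ξ)) p'
          + ∑ j : Fin k, Sg p' j * Aux.Psi f (0, EuclideanSpace.single j 1) (p', ξ) := by
    funext p'
    show opL V₀ V (fun q => f (q, ξ)) p' + ∑ j : Fin k, Sg p' j * dxi j f (p', ξ) = _
    congr 1
    exact Finset.sum_congr rfl fun j _ => by rw [hb' j (p', ξ)]
  -- V_i applied to the slice of 𝓛 f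
  have hM : ∀ i : Fin k, vAct (V i) (fun p' => opLL V₀ V Sg f (p', ξ)) p
      = vAct (V i) (opL V₀ V (fun p' => f (p', ξ))) p
        + ∑ j : Fin k,
            (Sg p j * fderiv ℝ (Aux.Psi f (0, EuclideanSpace.single j 1)) (p, ξ) (V i p, 0)
              + dxi j f (p, ξ) * vAct (V i) (fun p' => Sg p' j) p) := by
    intro i
    have dsum : ∀ j : Fin k, ContDiff ℝ ∞
        (fun p' => Sg p' j * Aux.Psi f (0, EuclideanSpace.single j 1) (p', ξ)) := fun j =>
      (contDiff_euclidean.1 hSg' j).mul (Aux.slice1_contDiff (Aux.Psi_contDiff hf' _) ξ)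
    rw [hrw, Aux.vAct_add (Aux.cdiff hopLg p)
        (Aux.cdiff (ContDiff.sum fun j _ => dsum j) p)]
    congr 1
    rw [Aux.vAct_sum (fun j => Aux.cdiff (dsum j) p)]
    refine Finset.sum_congr rfl fun j _ => ?_
    rw [Aux.vAct_mul (Aux.cdiff (contDiff_euclidean.1 hSg' j) p)
        (Aux.cdiff (Aux.slice1_contDiff (Aux.Psi_contDiff hf' _) ξ) p),
      Aux.vAct_slice (Aux.Psi_contDiff hf' _) (V i) p ξ, ← hb' j (p, ξ)]
  -- the term 𝓛(Γ(f,f)) at (p,ξ)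
  have hGslice : carre (opL V₀ V) (fun p' => f (p', ξ)) (fun p' => f (p', ξ))
      = fun q => ∑ i : Fin k, Aux.Phi V f i (q, ξ) * Aux.Phi V f i (q, ξ) := by
    funext q
    rw [Aux.carre_opL hV' hg hg q]
    exact Finset.sum_congr rfl fun i _ => by rw [Aux.vAct_slice hf' (V i) q ξ]; rfl
  have hT1 : opLL V₀ V Sg (fun x => ∑ i : Fin k, Aux.Phi V f i x * Aux.Phi V f i x) (p, ξ)
      = opL V₀ V (carre (opL V₀ V) (fun p' => f (p', ξ)) (fun p' => f (p', ξ))) p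
        + ∑ j : Fin k, Sg p j *
            (∑ i : Fin k,
              (vAct (V i) (fun p' => f (p', ξ)) p
                  * fderiv ℝ (Aux.Psi f (0, EuclideanSpace.single j 1)) (p, ξ) (V i p, 0)
                + vAct (V i) (fun p' => f (p', ξ)) p
                  * fderiv ℝ (Aux.Psi f (0, EuclideanSpace.single j 1)) (p, ξ) (V i p, 0))) := by
    show opL V₀ V (fun q => ∑ i : Fin k, Aux.Phi V f i (q, ξ) * Aux.Phi V f i (q, ξ)) p
        + ∑ j : Fin k, Sg p j *
            dxi j (fun x => ∑ i : Fin k, Aux.Phi V f i x * Aux.Phi V f i x) (p, ξ) = _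
    rw [← hGslice]
    congr 1
    exact Finset.sum_congr rfl fun j _ => by rw [hdxiG j]
  -- the term Γ(f, 𝓛f) at (p,ξ)
  have hT2 : carre (opLL V₀ V Sg) f (opLL V₀ V Sg f) (p, ξ)
      = ∑ i : Fin k, vAct (V i) (fun p' => f (p', ξ)) p
          * (vAct (V i) (opL V₀ V (fun p' => f (p', ξ))) p
            + ∑ j : Fin k,
                (Sg p j * fderiv ℝ (Aux.Psi f (0, EuclideanSpace.single j 1)) (p, ξ) (V i p, 0)
                  + dxi j f (p, ξ) * vAct (V i) (fun p' => Sg p' j) p)) := by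
    rw [Aux.carre_opLL hV' hf' hLL p ξ]
    exact Finset.sum_congr rfl fun i _ => by rw [hM i]
  -- assemble
  rw [show carre2 (opLL V₀ V Sg) f (p, ξ)
      = (1/2) * (opLL V₀ V Sg (carre (opLL V₀ V Sg) f f) (p, ξ)
          - 2 * carre (opLL V₀ V Sg) f (opLL V₀ V Sg f) (p, ξ)) from rfl,
    show carre2 (opL V₀ V) (fun p' => f (p', ξ)) p
      = (1/2) * (opL V₀ V
            (carre (opL V₀ V) (fun p' => f (p', ξ)) (fun p' => f (p', ξ))) p
          - 2 * carre (opL V₀ V) (fun p' => f (p', ξ)) (opL V₀ V fun p' => f (p', ξ)) p)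
      from rfl,
    hGam, hT1, hT2, Aux.carre_opL hV' hg hopLg p]
  exact Aux.alg k
    (opL V₀ V (carre (opL V₀ V) (fun p' => f (p', ξ)) (fun p' => f (p', ξ))) p)
    (fun i => vAct (V i) (fun p' => f (p', ξ)) p)
    (fun i => vAct (V i) (opL V₀ V (fun p' => f (p', ξ))) p)
    (fun j => Sg p j)
    (fun j => dxi j f (p, ξ))
    (fun i j => fderiv ℝ (Aux.Psi f (0, EuclideanSpace.single j 1)) (p, ξ) (V i p, 0))
    (fun i j => vAct (V i) (fun p' => Sg p' j) p)
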